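/- Let G = G₁ ∪ G₂ be an essential reaction network. Then the following are equivalent: (D1) for every irreducible component Γ of G, the projection p₁(Γ) is a union of irreducible components of G₁; (D2) G₁ is essential. -/

import Mathlib

/-- A reaction `ν → ν'` is active on `x` iff `ν ≤ x` componentwise. -/
def Active {σ : Type*} (ν x : σ → ℕ) : Prop := ∀ i, ν i ≤ x i

/-- One jump of the CTMC: firing an active reaction `ν → ν'` moves `x` to `x + ν' - ν`. -/
def Step {σ : Type*} (R : Set ((σ → ℕ) × (σ → ℕ))) (x y : σ → ℕ) : Prop :=
  ∃ r ∈ R, Active r.1 x ∧ ∀ i, y i + r.1 i = x i + r.2 i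

/-- `u` is accessible from `x` via a finite sequence of active reactions. -/
def Accessible {σ : Type*} (R : Set ((σ → ℕ) × (σ → ℕ))) : (σ → ℕ) → (σ → ℕ) → Prop :=
  Relation.ReflTransGen (Step R)

/-- An irreducible component (closed communicating class): a nonempty `Γ` such that for
`x ∈ Γ`, `u` is accessible from `x` iff `u ∈ Γ`. -/
def IsIrreducibleComponent {σ : Type*} (R : Set ((σ → ℕ) × (σ → ℕ)))
    (Γ : Set (σ → ℕ)) : Prop :=
  Γ.Nonempty ∧ ∀ x ∈ Γ, ∀ u, Accessible R x u ↔ u ∈ Γ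

/-- A network is essential if the whole state space is a union of closed communicating
classes. -/
def Essential {σ : Type*} (R : Set ((σ → ℕ) × (σ → ℕ))) : Prop :=
  ∀ x : σ → ℕ, ∃ Γ, IsIrreducibleComponent R Γ ∧ x ∈ Γ

/-- Zero-padding embedding of a state on species `S` into the full species set. -/
def pad {ι : Type*} [DecidableEq ι] (S : Finset ι) (v : ↥S → ℕ) : ι → ℕ :=
  fun i => if h : i ∈ S then v ⟨i, h⟩ else 0

/-- Coordinate projection onto the species of `S`. -/
def proj {ι : Type*} (S : Finset ι) (x : ι → ℕ) : ↥S → ℕ := fun i => x ↑i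

/-- The reactions of a subnetwork on species `S`, embedded (by zero-padding) as reactions
on the full species set. -/
def padR {ι : Type*} [DecidableEq ι] (S : Finset ι) (R : Set ((↥S → ℕ) × (↥S → ℕ))) :
    Set ((ι → ℕ) × (ι → ℕ)) := (fun r => (pad S r.1, pad S r.2)) '' R

/-!
Firing a reaction of `G₁` only touches the species of `G₁`, so every path of `G₁` starting at
`p₁ x` lifts to a path of `G` starting at `x`. Hence, when `G₁` is essential, the closed class of
`G₁` through any point of `p₁(Γ)` stays inside `p₁(Γ)`, which makes `p₁(Γ)` a union of classes.
Conversely, every state `y` of `G₁` is `p₁` of its zero-padding, which lies in some class `Γ` of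
the essential network `G`, so `y` lies in one of the classes of `G₁` making up `p₁(Γ)`.
-/

section Accessibility

variable {σ : Type*}

lemma Step.mono {R R' : Set ((σ → ℕ) × (σ → ℕ))} (hR : R ⊆ R') {x y : σ → ℕ}
    (h : Step R x y) : Step R' x y :=
  let ⟨r, hr, hact, heq⟩ := h
  ⟨r, hR hr, hact, heq⟩

lemma Accessible.mono {R R' : Set ((σ → ℕ) × (σ → ℕ))} (hR : R ⊆ R') {x y : σ → ℕ}
    (h : Accessible R x y) : Accessible R' x y :=
  Relation.ReflTransGen.mono (fun _ _ => Step.mono hR) _ _ h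

lemma exists_sUnion_components_eq_iff (R : Set ((σ → ℕ) × (σ → ℕ))) (A : Set (σ → ℕ)) :
    (∃ 𝒞 : Set (Set (σ → ℕ)), (∀ C ∈ 𝒞, IsIrreducibleComponent R C) ∧ ⋃₀ 𝒞 = A) ↔
      ∀ x ∈ A, ∃ C, IsIrreducibleComponent R C ∧ x ∈ C ∧ C ⊆ A := by
  constructor
  · rintro ⟨𝒞, h𝒞, rfl⟩ x ⟨C, hC, hxC⟩
    exact ⟨C, h𝒞 C hC, hxC, Set.subset_sUnion_of_mem hC⟩
  · intro h
    refine ⟨{C | IsIrreducibleComponent R C ∧ C ⊆ A}, fun C hC => hC.1, ?_⟩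
    refine Set.Subset.antisymm (Set.sUnion_subset fun C hC => hC.2) fun x hx => ?_
    obtain ⟨C, hC, hxC, hCA⟩ := h x hx
    exact ⟨C, ⟨hC, hCA⟩, hxC⟩

end Accessibility

section Projection

variable {ι : Type*} [DecidableEq ι] (S : Finset ι)

lemma proj_pad (v : ↥S → ℕ) : proj S (pad S v) = v := by
  funext j
  simp [proj, pad, j.2]

lemma Active.pad {ν : ↥S → ℕ} {x : ι → ℕ} (h : Active ν (proj S x)) : Active (pad S ν) x := by
  intro i
  by_cases hi : i ∈ S
  · simpa [_root_.pad, hi, proj] using h ⟨i, hi⟩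
  · simp [_root_.pad, hi]

variable {S} {R₁ : Set ((↥S → ℕ) × (↥S → ℕ))}

lemma Step.lift_padR {x : ι → ℕ} {u : ↥S → ℕ} (h : Step R₁ (proj S x) u) :
    ∃ x', Step (padR S R₁) x x' ∧ proj S x' = u := by
  obtain ⟨r, hr, hact, heq⟩ := h
  have hact' := hact.pad S
  refine ⟨fun i => x i + pad S r.2 i - pad S r.1 i, ⟨_, ⟨r, hr, rfl⟩, hact', fun i => ?_⟩, ?_⟩
  · have := hact' i
    dsimp only
    omega
  · funext j
    have h₁ := heq j
    have h₂ := hact j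
    simp only [proj, pad, j.2, dite_true, Subtype.coe_eta] at *
    omega

lemma Accessible.lift_padR {y u : ↥S → ℕ} (h : Accessible R₁ y u) {x : ι → ℕ}
    (hx : proj S x = y) : ∃ x', Accessible (padR S R₁) x x' ∧ proj S x' = u := by
  induction h using Relation.ReflTransGen.head_induction_on generalizing x with
  | refl => exact ⟨x, .refl, hx⟩
  | head hs _ ih =>
    obtain ⟨x', hxx', rfl⟩ := Step.lift_padR (hx ▸ hs)
    obtain ⟨x'', hx'x'', hx''⟩ := ih rfl
    exact ⟨x'', .head hxx' hx'x'', hx''⟩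

lemma IsIrreducibleComponent.subset_proj_image {R : Set ((ι → ℕ) × (ι → ℕ))}
    (hR : padR S R₁ ⊆ R) {Γ : Set (ι → ℕ)} (hΓ : IsIrreducibleComponent R Γ)
    {C : Set (↥S → ℕ)} (hC : IsIrreducibleComponent R₁ C) {x : ι → ℕ} (hxΓ : x ∈ Γ)
    (hxC : proj S x ∈ C) : C ⊆ proj S '' Γ := by
  intro v hv
  obtain ⟨x', hxx', rfl⟩ := ((hC.2 _ hxC v).mpr hv).lift_padR rfl
  exact ⟨x', (hΓ.2 x hxΓ x').mp (hxx'.mono hR), rfl⟩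

end Projection

theorem stmt7_general {ι : Type*} [DecidableEq ι] (S₁ S₂ : Finset ι)
    (R₁ : Set ((↥S₁ → ℕ) × (↥S₁ → ℕ))) (R₂ : Set ((↥S₂ → ℕ) × (↥S₂ → ℕ)))
    (hess : Essential (padR S₁ R₁ ∪ padR S₂ R₂)) :
    (∀ Γ : Set (ι → ℕ), IsIrreducibleComponent (padR S₁ R₁ ∪ padR S₂ R₂) Γ →
      ∃ 𝒞 : Set (Set (↥S₁ → ℕ)),
        (∀ C ∈ 𝒞, IsIrreducibleComponent R₁ C) ∧ ⋃₀ 𝒞 = proj S₁ '' Γ) ↔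
    Essential R₁ := by
  simp only [exists_sUnion_components_eq_iff]
  constructor
  · intro h y
    obtain ⟨Γ, hΓ, hyΓ⟩ := hess (pad S₁ y)
    obtain ⟨C, hC, hyC, -⟩ := h Γ hΓ y ⟨pad S₁ y, hyΓ, proj_pad S₁ y⟩
    exact ⟨C, hC, hyC⟩
  · rintro hess₁ Γ hΓ _ ⟨x, hxΓ, rfl⟩
    obtain ⟨C, hC, hxC⟩ := hess₁ (proj S₁ x)
    exact ⟨C, hC, hxC, hΓ.subset_proj_image Set.subset_union_left hC hxΓ hxC⟩

/-- for an essential union `G = G₁ ∪ G₂`, every irreducible component of `G`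
projects to a union of irreducible components of `G₁` iff `G₁` is essential. -/
theorem stmt7 {ι : Type*} [Fintype ι] [DecidableEq ι] (S₁ S₂ : Finset ι)
    (hcov : S₁ ∪ S₂ = Finset.univ)
    (R₁ : Set ((↥S₁ → ℕ) × (↥S₁ → ℕ))) (R₂ : Set ((↥S₂ → ℕ) × (↥S₂ → ℕ)))
    (hess : Essential (padR S₁ R₁ ∪ padR S₂ R₂)) :
    (∀ Γ : Set (ι → ℕ), IsIrreducibleComponent (padR S₁ R₁ ∪ padR S₂ R₂) Γ →
      ∃ 𝒞 : Set (Set (↥S₁ → ℕ)),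
        (∀ C ∈ 𝒞, IsIrreducibleComponent R₁ C) ∧ ⋃₀ 𝒞 = proj S₁ '' Γ) ↔
    Essential R₁ :=
  stmt7_general S₁ S₂ R₁ R₂ hess
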